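/- arXiv:1009.3134 — 3 statements merged into one kernel-verified Lean document; each statement's English description precedes it below -/
import Mathlib

section
/- Suppose a node v has criticality nc_v = |w|/|v| = 1/2 after a redistribution (where w is its left child and |v| = |w| + |z| + 1 counts nodes in the subtree of v), and each join or departure changes |w| or |z| by exactly 1 (and |v| accordingly). If a, b, s are naturals with a/s = 1/2 and after k operations the new values a', s' satisfy |a' − a| + |s' − s| ≤ 2k and a'/s' ∉ [1/4, 3/4], then k ≥ s/8. -/
theorem stmt_9 (a s a' s' k : ℕ)
    (hhalf : (a : ℝ) / s = 1 / 2)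
    (hmove : |(a' : ℝ) - a| + |(s' : ℝ) - s| ≤ 2 * k)
    (hout : (a' : ℝ) / s' ∉ Set.Icc (1 / 4 : ℝ) (3 / 4)) :
    (k : ℝ) ≥ s / 8 := by
  have hs : (s : ℝ) ≠ 0 := by
    intro h
    rw [h, div_zero] at hhalf
    norm_num at hhalf
  have hs0 : (0 : ℝ) < s := lt_of_le_of_ne (Nat.cast_nonneg s) (Ne.symm hs)
  have ha : (a : ℝ) = s / 2 := by
    field_simp at hhalf; linarith
  have hout' : (a' : ℝ) / s' < 1 / 4 ∨ (3 / 4 : ℝ) < a' / s' := by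
    simp only [Set.mem_Icc, not_and_or, not_le] at hout
    tauto
  rcases eq_or_ne s' 0 with h0 | h0
  · subst h0
    have h1 : |(0 : ℝ) - s| = s := by
      rw [abs_sub_comm, sub_zero, abs_of_nonneg (Nat.cast_nonneg s)]
    push_cast at hmove
    rw [h1] at hmove
    nlinarith [abs_nonneg ((a' : ℝ) - a)]
  · have hs' : (0 : ℝ) < s' := by
      have := Nat.pos_of_ne_zero h0
      exact_mod_cast this
    rcases hout' with h | h
    · have hlt : (a' : ℝ) < 1 / 4 * s' := (div_lt_iff₀ hs').mp h
      rcases abs_cases ((a' : ℝ) - a) with ⟨e1, _⟩ | ⟨e1, _⟩ <;>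
        rcases abs_cases ((s' : ℝ) - s) with ⟨e2, _⟩ | ⟨e2, _⟩ <;>
        nlinarith
    · have hlt : (3 / 4 : ℝ) * s' < a' := (lt_div_iff₀ hs').mp h
      rcases abs_cases ((a' : ℝ) - a) with ⟨e1, _⟩ | ⟨e1, _⟩ <;>
        rcases abs_cases ((s' : ℝ) - s) with ⟨e2, _⟩ | ⟨e2, _⟩ <;>
        nlinarith
end

section
/- Let c ∈ (1, 2] and suppose two sibling nodes p, q have equal densities d(p) = d(q) after a redistribution, where density d(x) = w(x)/|x| and |p|, |q| are fixed subtree sizes with |p| = Θ(|q|). Then in order for the criticality c(p,q) = d(p)/d(q) to leave the interval [1/c, c], at least min(w(p), w(q))·(c−1)/(2c) element insertions or deletions must occur in the subtrees of p and q combined. Formally: if w_p/|p| = w_q/|q| initially and after k single-element updates the new weights w'_p, w'_q satisfy |w'_p − w_p| + |w'_q − w_q| ≤ k and (w'_p/|p|)/(w'_q/|q|) > c, then k ≥ (c−1)/(c+1) · min(w_p, w_q). -/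
theorem stmt_10 (c : ℝ) (hc1 : 1 < c) (hc2 : c ≤ 2)
    (sp sq : ℕ) (hsp : 0 < sp) (hsq : 0 < sq)
    (wp wq wp' wq' k : ℕ)
    (heq : (wp : ℝ) / sp = (wq : ℝ) / sq)
    (hmove : |(wp' : ℝ) - wp| + |(wq' : ℝ) - wq| ≤ k)
    (hout : ((wp' : ℝ) / sp) / ((wq' : ℝ) / sq) > c) :
    (k : ℝ) ≥ (c - 1) / (c + 1) * min (wp : ℝ) (wq : ℝ) := by
  have hsp' : (0:ℝ) < sp := by exact_mod_cast hsp
  have hsq' : (0:ℝ) < sq := by exact_mod_cast hsq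
  -- wq' must be positive
  have hwq' : (0:ℝ) < (wq' : ℝ) := by
    rcases Nat.eq_zero_or_pos wq' with h | h
    · subst h; simp at hout; linarith
    · exact_mod_cast h
  have hdq : (0:ℝ) < (wq' : ℝ) / sq := div_pos hwq' hsq'
  have hcross : c * ((wq' : ℝ) * sp) < (wp' : ℝ) * sq := by
    have h1 : c * ((wq' : ℝ) / sq) < (wp' : ℝ) / sp := (lt_div_iff₀ hdq).mp hout
    rw [mul_div_assoc', div_lt_div_iff₀ hsq' hsp'] at h1
    nlinarith
  have hwpsq : (wp : ℝ) * sq = (wq : ℝ) * sp := by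
    field_simp at heq; linarith
  set a : ℝ := (wp' : ℝ) - wp with ha
  set b : ℝ := (wq' : ℝ) - wq with hb
  have habs : |a| + |b| ≤ (k : ℝ) := hmove
  set M : ℝ := max (sp : ℝ) sq with hM
  have hMsp : (sp : ℝ) ≤ M := le_max_left _ _
  have hMsq : (sq : ℝ) ≤ M := le_max_right _ _
  have hMpos : 0 < M := lt_of_lt_of_le hsp' hMsp
  set m : ℝ := min (wp : ℝ) wq with hm
  have hm0 : 0 ≤ m := le_min (Nat.cast_nonneg _) (Nat.cast_nonneg _)
  have hmM : m * M ≤ (wp : ℝ) * sq := by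
    rcases le_total (sp : ℝ) (sq : ℝ) with h | h
    · have hMeq : M = (sq : ℝ) := max_eq_right h
      rw [hMeq]
      exact mul_le_mul_of_nonneg_right (min_le_left _ _) (le_of_lt hsq')
    · have hMeq : M = (sp : ℝ) := max_eq_left h
      rw [hMeq, hwpsq]
      exact mul_le_mul_of_nonneg_right (min_le_right _ _) (le_of_lt hsp')
  have haM : a * sq ≤ |a| * M := by
    calc a * sq ≤ |a| * sq := mul_le_mul_of_nonneg_right (le_abs_self a) (le_of_lt hsq')
    _ ≤ |a| * M := mul_le_mul_of_nonneg_left hMsq (abs_nonneg a)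
  have hbM : -(c * b * sp) ≤ c * |b| * M := by
    have h1 : -b ≤ |b| := neg_le_abs b
    calc -(c * b * sp) = c * (-b) * sp := by ring
    _ ≤ c * |b| * sp := by
        apply mul_le_mul_of_nonneg_right _ (le_of_lt hsp')
        exact mul_le_mul_of_nonneg_left h1 (by linarith)
    _ ≤ c * |b| * M := by
        apply mul_le_mul_of_nonneg_left hMsp
        positivity
  -- key inequality: (c-1)*wp*sq < a*sq - c*b*sp
  have hkey : (c - 1) * ((wp : ℝ) * sq) < a * sq - c * b * sp := by
    have hwp' : (wp' : ℝ) = wp + a := by rw [ha]; ring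
    have hwq'' : (wq' : ℝ) = wq + b := by rw [hb]; ring
    rw [hwp', hwq''] at hcross
    nlinarith [hwpsq]
  have hchain : (c - 1) * (m * M) < c * (k : ℝ) * M := by
    calc (c - 1) * (m * M) ≤ (c - 1) * ((wp : ℝ) * sq) :=
          mul_le_mul_of_nonneg_left hmM (by linarith)
    _ < a * sq - c * b * sp := hkey
    _ ≤ |a| * M + c * |b| * M := by linarith
    _ ≤ c * (k : ℝ) * M := by
        have h2 : |a| + c * |b| ≤ c * (k : ℝ) := by
          have h4 := mul_le_mul_of_nonneg_left habs (by linarith : (0:ℝ) ≤ c)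
          have h5 : 0 ≤ (c - 1) * |a| :=
            mul_nonneg (by linarith) (abs_nonneg a)
          nlinarith
        have h6 := mul_le_mul_of_nonneg_right h2 hMpos.le
        linarith [h6]
  have hck : (c - 1) * m < c * (k : ℝ) := by
    have h3 : ((c - 1) * m) * M < (c * (k : ℝ)) * M := by ring_nf; ring_nf at hchain; exact hchain
    exact lt_of_mul_lt_mul_right h3 (le_of_lt hMpos)
  have hk0 : (0:ℝ) ≤ k := Nat.cast_nonneg _
  rw [ge_iff_le, div_mul_eq_mul_div, div_le_iff₀ (by linarith : (0:ℝ) < c + 1)]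
  linarith
end

section
/- Suppose after a weight update at node v at height h it holds that b(v) = S where S is the current exact sum Σ b(v_i) + e(v). If subsequently the quantity S changes only through unit increments/decrements (element insertions/deletions in the subtree), then Invariant b(v) > (1−ε_h)·S (respectively b(v) < (1+ε_h)·S) can first be violated only after at least ε_h·S/(1+ε_h) such unit changes. In particular, with ε_h = 1/h² and S within a factor 2 of the real weight w(v), at least Ω(w(v)/h²) updates in the subtree of v are needed between consecutive weight recomputations at v. -/
theorem stmt_16 (ε S₀ S k : ℝ) (hε : 0 < ε) (hS₀ : 0 ≤ S₀)
    (hk : |S - S₀| ≤ k)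
    (hviol : S₀ ≤ (1 - ε) * S ∨ S₀ ≥ (1 + ε) * S) :
    k ≥ ε * S₀ / (1 + ε) := by
  have h1 : (0:ℝ) < 1 + ε := by linarith
  rw [ge_iff_le, div_le_iff₀ h1]
  have hl : -k ≤ S - S₀ := by linarith [neg_abs_le (S - S₀)]
  have hr : S - S₀ ≤ k := (le_abs_self _).trans hk
  rcases hviol with h | h <;> nlinarith
end
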